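/- arXiv:2301.01203 — 4 statements merged into one kernel-verified Lean document; each statement's English description precedes it below -/
import Mathlib

section
/- Let |ψ⟩ be a normalized pure state on η registers of n qubits each that is antisymmetric under swapping any two registers, and let P_1,…,P_k be projectors onto orthonormal n-qubit states. Then 0 ≤ ⟨ψ|(P_1 ⊗ ⋯ ⊗ P_k ⊗ I^{⊗(η−k)})|ψ⟩ ≤ (η−k)!/η!. -/
/-!
Extend `φ_1, …, φ_k` to an orthonormal basis `b` of one register and expand `ψ` in the product
basis, with coefficients `a m = ⟨b (m 1) ⊗ ⋯ ⊗ b (m η), ψ⟩`. The expectation value is then the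
weight `∑ |a m|²` of the labels `m` with `m i = φ_i` for `i ≤ k`. Antisymmetry makes `a m` vanish
unless `m` is injective and makes `|a m|` invariant under permuting registers. Hence for each of the
`P(η, k)` injective `σ : [k] → [η]` the labels with `m ∘ σ = (φ_i)` carry the same weight, and
these label sets are disjoint on injective labels, so `P(η, k)` times the expectation value is at
most `∑ |a m|² = ‖ψ‖² = 1`.
-/

open scoped Classical

/-- Expectation value ⟨ψ| A |ψ⟩ of an operator `A` in the state `ψ`. -/
noncomputable def expval {I : Type*} [Fintype I] (A : Matrix I I ℂ) (ψ : I → ℂ) : ℂ :=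
  dotProduct (star ψ) (A.mulVec ψ)

/-- The operator acting with the rank-one projector onto `φ i` on register `i` for
`i = 1, …, k` (the first `k` registers) and with the identity on the remaining registers. -/
noncomputable def projProd (n η k : ℕ) (hk : k ≤ η) (φ : Fin k → Fin (2 ^ n) → ℂ) :
    Matrix (Fin η → Fin (2 ^ n)) (Fin η → Fin (2 ^ n)) ℂ :=
  Matrix.of fun x y =>
    (if ∀ j : Fin η, (∀ i : Fin k, Fin.castLE hk i ≠ j) → x j = y j then (1 : ℂ) else 0) *
      ∏ i : Fin k, φ i (x (Fin.castLE hk i)) * star (φ i (y (Fin.castLE hk i)))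

open Finset Equiv

section Antisymmetry

variable {ι α M : Type*} [DecidableEq ι]

def IsSwapAntisymm [Neg M] (f : (ι → α) → M) : Prop :=
  ∀ i j : ι, i ≠ j → ∀ x : ι → α, f (x ∘ swap i j) = -f x

variable [AddCommGroup M] {f : (ι → α) → M}

theorem IsSwapAntisymm.comp_perm [Fintype ι] (hf : IsSwapAntisymm f) (π : Perm ι) (x : ι → α) :
    f (x ∘ π) = (Perm.sign π : ℤ) • f x := by
  induction π using Perm.swap_induction_on generalizing x with
  | one => simp
  | swap_mul π i j hij ih =>
    rw [Perm.coe_mul, ← Function.comp_assoc, ih, hf i j hij, Perm.sign_mul, Perm.sign_swap hij]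
    simp

theorem IsSwapAntisymm.eq_zero_of_not_injective [IsAddTorsionFree M] (hf : IsSwapAntisymm f)
    {x : ι → α} (hx : ¬Function.Injective x) : f x = 0 := by
  obtain ⟨i, j, hxij, hij⟩ := Function.not_injective_iff.mp hx
  have hfix : x ∘ swap i j = x := by simp [comp_swap_eq_update, hxij]
  rw [← self_eq_neg, ← hf i j hij, hfix]

theorem IsSwapAntisymm.normSq_comp_perm [Fintype ι] {f : (ι → α) → ℂ} (hf : IsSwapAntisymm f)
    (π : Perm ι) (x : ι → α) : Complex.normSq (f (x ∘ π)) = Complex.normSq (f x) := by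
  rw [hf.comp_perm, zsmul_eq_mul, Complex.normSq_mul, Complex.normSq_intCast]
  rcases Int.units_eq_one_or (Perm.sign π) with h | h <;> simp [h]

end Antisymmetry

section Counting

variable {ι β κ : Type*} [Fintype ι] [DecidableEq ι] [Fintype β] [DecidableEq β] [Fintype κ]

-- All `σ : κ ↪ ι` are conjugate under `Perm ι`, and an injective `m` has `m ∘ σ = c` for at
-- most one `σ`.
theorem card_embedding_mul_sum_le (w : (ι → β) → ℝ) (hw : 0 ≤ w)
    (hperm : ∀ (π : Perm ι) (m : ι → β), w (m ∘ π) = w m)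
    (hinj : ∀ m, ¬Function.Injective m → w m = 0) (σ₀ : κ ↪ ι) (c : κ → β) :
    Fintype.card (κ ↪ ι) * ∑ m with m ∘ σ₀ = c, w m ≤ ∑ m, w m := by
  have hσ : ∀ σ : κ ↪ ι, ∑ m with m ∘ σ = c, w m = ∑ m with m ∘ σ₀ = c, w m := by
    intro σ
    obtain ⟨g, rfl⟩ := Perm.exists_smul_eq_embedding σ₀ σ
    rw [sum_filter, sum_filter]
    refine Fintype.sum_equiv (g.symm.arrowCongr (Equiv.refl β)) _ _ fun m => ?_
    change _ = if (m ∘ g) ∘ σ₀ = c then w (m ∘ g) else 0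
    rw [hperm]
    rfl
  calc Fintype.card (κ ↪ ι) * ∑ m with m ∘ σ₀ = c, w m
      = ∑ σ : κ ↪ ι, ∑ m with m ∘ σ = c, w m := by simp [hσ]
    _ = ∑ m, #{σ : κ ↪ ι | m ∘ σ = c} * w m := by
      simp_rw [sum_filter]
      rw [sum_comm]
      simp [← sum_filter]
    _ ≤ ∑ m, w m := by
      refine sum_le_sum fun m _ => ?_
      by_cases hm : Function.Injective m
      · have hcard : #{σ : κ ↪ ι | m ∘ σ = c} ≤ 1 := by
          refine card_le_one.mpr fun σ hσm τ hτm => ?_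
          simp only [mem_filter] at hσm hτm
          exact Function.Embedding.ext fun a => hm (congrFun (hσm.2.trans hτm.2.symm) a)
        exact mul_le_of_le_one_left (hw m) (by exact_mod_cast hcard)
      · simp [hinj m hm]

end Counting

section TensorCoefficients

variable {ι R β : Type*} [Fintype ι] [DecidableEq ι] [Fintype R]

-- `tensorCoeff b ψ m = ⟨b (m 1) ⊗ ⋯ ⊗ b (m η), ψ⟩`, the coordinates of `ψ` in the product basis.
noncomputable def tensorCoeff (b : β → EuclideanSpace ℂ R) (ψ : (ι → R) → ℂ) (m : ι → β) : ℂ :=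
  ∑ x, (∏ j, star (b (m j) (x j))) * ψ x

theorem IsSwapAntisymm.tensorCoeff {ψ : (ι → R) → ℂ} (hψ : IsSwapAntisymm ψ)
    (b : β → EuclideanSpace ℂ R) : IsSwapAntisymm (tensorCoeff b ψ) := by
  intro i j hij m
  simp only [_root_.tensorCoeff, ← sum_neg_distrib]
  refine Fintype.sum_equiv ((swap i j).arrowCongr (Equiv.refl R)) _ _ fun x => ?_
  have hx : x = ((swap i j).arrowCongr (Equiv.refl R) x) ∘ swap i j := by
    funext t; simp
  conv_lhs => rw [hx, hψ i j hij, ← Equiv.prod_comp (swap i j)]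
  simp

theorem sum_piFinset_normSq_tensorCoeff (b : β → EuclideanSpace ℂ R) (ψ : (ι → R) → ℂ)
    (C : ι → Finset β) :
    ((∑ m ∈ Fintype.piFinset C, Complex.normSq (tensorCoeff b ψ m) : ℝ) : ℂ) =
      expval (Matrix.of fun x y => ∏ j, ∑ t ∈ C j, b t (x j) * star (b t (y j))) ψ := by
  have hterm (m : ι → β) : (Complex.normSq (tensorCoeff b ψ m) : ℂ) =
      ∑ x, ∑ y, star (ψ x) * (∏ j, b (m j) (x j) * star (b (m j) (y j))) * ψ y := by
    simp only [Complex.normSq_eq_conj_mul_self, ← RCLike.star_def, tensorCoeff, star_sum,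
      star_mul', star_prod, star_star, sum_mul_sum, prod_mul_distrib]
    exact sum_congr rfl fun x _ => sum_congr rfl fun y _ => by ring
  simp only [expval, dotProduct, Matrix.mulVec, Matrix.of_apply, Pi.star_apply, prod_univ_sum,
    mul_sum, sum_mul, Complex.ofReal_sum, hterm]
  rw [sum_comm]
  refine sum_congr rfl fun x _ => ?_
  rw [sum_comm]
  exact sum_congr rfl fun y _ => sum_congr rfl fun m _ => by ring

end TensorCoefficients

section OrthonormalBasis

variable {ι R β : Type*} [Fintype ι] [DecidableEq ι] [Fintype R] [Fintype β]

theorem OrthonormalBasis.sum_apply_mul_star_apply {𝕜 : Type*} [RCLike 𝕜] [DecidableEq R]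
    (b : OrthonormalBasis β 𝕜 (EuclideanSpace 𝕜 R)) (u v : R) :
    ∑ t, b t u * star (b t v) = if u = v then 1 else 0 := by
  have h := congrArg (fun z : EuclideanSpace 𝕜 R => z u) (b.sum_repr' (EuclideanSpace.single v 1))
  simpa [EuclideanSpace.inner_single_right, PiLp.single_apply, mul_comm] using h

theorem OrthonormalBasis.sum_normSq_tensorCoeff (b : OrthonormalBasis β ℂ (EuclideanSpace ℂ R))
    (ψ : (ι → R) → ℂ) : ((∑ m, Complex.normSq (tensorCoeff b ψ m) : ℝ) : ℂ) = star ψ ⬝ᵥ ψ := by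
  have hkernel : (Matrix.of fun x y : ι → R => ∏ j, ∑ t, b t (x j) * star (b t (y j))) = 1 := by
    ext x y
    simp only [Matrix.of_apply, b.sum_apply_mul_star_apply, prod_boole, Matrix.one_apply,
      mem_univ, true_implies, funext_iff]
  rw [← Fintype.piFinset_univ, sum_piFinset_normSq_tensorCoeff, hkernel, expval, Matrix.one_mulVec]

end OrthonormalBasis

section Pinned

variable {ι β κ : Type*} [Fintype ι] [DecidableEq ι] [Fintype β]

noncomputable def pinnedFinsets (σ : κ → ι) (c : κ → β) : ι → Finset β :=
  Function.extend σ (fun i => {c i}) fun _ => univ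

theorem piFinset_pinnedFinsets [Fintype κ] [DecidableEq β] {σ : κ → ι}
    (hσ : Function.Injective σ) (c : κ → β) :
    Fintype.piFinset (pinnedFinsets σ c) = ({m | m ∘ σ = c} : Finset (ι → β)) := by
  ext m
  simp only [Fintype.mem_piFinset, mem_filter, mem_univ, true_and, pinnedFinsets]
  constructor
  · intro h
    funext i
    simpa [hσ.extend_apply] using h (σ i)
  · rintro rfl j
    by_cases hj : ∃ i, σ i = j
    · obtain ⟨i, rfl⟩ := hj
      simp [hσ.extend_apply]
    · simp [Function.extend_apply' _ _ _ hj]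

theorem projProd_eq_pinned_kernel {n η k : ℕ} (hk : k ≤ η) (φ : Fin k → Fin (2 ^ n) → ℂ)
    (b : OrthonormalBasis β ℂ (EuclideanSpace ℂ (Fin (2 ^ n)))) (c : Fin k → β)
    (hc : ∀ i, b (c i) = WithLp.toLp 2 (φ i)) :
    projProd n η k hk φ = Matrix.of fun x y => ∏ j,
      ∑ t ∈ pinnedFinsets (Fin.castLEEmb hk) c j, b t (x j) * star (b t (y j)) := by
  set σ := Fin.castLEEmb hk
  have hfree : ∀ j ∈ (univ.map σ)ᶜ, ∀ x y : Fin η → Fin (2 ^ n),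
      ∑ t ∈ pinnedFinsets σ c j, b t (x j) * star (b t (y j)) = if x j = y j then 1 else 0 := by
    intro j hj x y
    rw [pinnedFinsets, Function.extend_apply' _ _ _ (by simpa using hj)]
    exact b.sum_apply_mul_star_apply _ _
  ext x y
  rw [projProd, Matrix.of_apply, Matrix.of_apply, ← prod_mul_prod_compl (univ.map σ), prod_map,
    prod_congr rfl (hfree · · x y), prod_boole, mul_comm]
  congr 1
  · refine prod_congr rfl fun i _ => ?_
    rw [pinnedFinsets, σ.injective.extend_apply, sum_singleton, hc]
    rfl
  · simp [σ]

end Pinned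

theorem orthonormal_toLp_of_dotProduct {ι R 𝕜 : Type*} [DecidableEq ι] [Fintype R] [RCLike 𝕜]
    (φ : ι → R → 𝕜) (h : ∀ i j, star (φ i) ⬝ᵥ φ j = if i = j then 1 else 0) :
    Orthonormal 𝕜 fun i => (WithLp.toLp 2 (φ i) : EuclideanSpace 𝕜 R) := by
  rw [orthonormal_iff_ite]
  intro i j
  rw [EuclideanSpace.inner_eq_star_dotProduct, dotProduct_comm]
  exact h i j

/-- For a normalized antisymmetric state ψ on η registers of n qubits and
projectors P_1,…,P_k onto orthonormal n-qubit states,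
0 ≤ ⟨ψ|(P_1 ⊗ ⋯ ⊗ P_k ⊗ I^{⊗(η−k)})|ψ⟩ ≤ (η−k)!/η!. -/
theorem stmt_1 (n η k : ℕ) (hk : k ≤ η)
    (ψ : (Fin η → Fin (2 ^ n)) → ℂ)
    (hnorm : dotProduct (star ψ) ψ = 1)
    (hanti : ∀ i j : Fin η, i ≠ j → ∀ x : Fin η → Fin (2 ^ n),
      ψ (x ∘ Equiv.swap i j) = -ψ x)
    (φ : Fin k → Fin (2 ^ n) → ℂ)
    (horth : ∀ i j : Fin k,
      dotProduct (star (φ i)) (φ j) = if i = j then 1 else 0) :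
    ∃ r : ℝ, expval (projProd n η k hk φ) ψ = (r : ℂ) ∧
      0 ≤ r ∧ r ≤ (Nat.factorial (η - k) : ℝ) / (Nat.factorial η : ℝ) := by
  obtain ⟨u, b, hsub, hb⟩ :=
    (orthonormal_toLp_of_dotProduct φ horth).toSubtypeRange.exists_orthonormalBasis_extension
  let c : Fin k → u := fun i => ⟨_, hsub (Set.mem_range_self i)⟩
  have hc : ∀ i, b (c i) = WithLp.toLp 2 (φ i) := fun i => by rw [hb]
  set a := tensorCoeff b ψ
  have ha : IsSwapAntisymm a := IsSwapAntisymm.tensorCoeff hanti b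
  have hpinned : expval (projProd n η k hk φ) ψ =
      ((∑ m with m ∘ Fin.castLEEmb hk = c, Complex.normSq (a m) : ℝ) : ℂ) := by
    rw [projProd_eq_pinned_kernel hk φ b c hc, ← sum_piFinset_normSq_tensorCoeff,
      piFinset_pinnedFinsets (Fin.castLEEmb hk).injective]
  have htotal : ∑ m, Complex.normSq (a m) = 1 := by
    exact_mod_cast (b.sum_normSq_tensorCoeff ψ).trans hnorm
  have hcount := card_embedding_mul_sum_le (fun m => Complex.normSq (a m))
    (fun m => Complex.normSq_nonneg _) ha.normSq_comp_perm
    (fun m hm => by simp [ha.eq_zero_of_not_injective hm]) (Fin.castLEEmb hk) c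
  refine ⟨_, hpinned, sum_nonneg fun m _ => Complex.normSq_nonneg _, ?_⟩
  rw [htotal, Fintype.card_embedding_eq, Fintype.card_fin, Fintype.card_fin] at hcount
  rw [le_div_iff₀ (by positivity), ← Nat.factorial_mul_descFactorial hk, Nat.cast_mul]
  linarith [mul_le_mul_of_nonneg_left hcount (Nat.cast_nonneg (η - k).factorial)]
end

section
/- Under the hypotheses of the antisymmetric projector lemma, if A_s for s ∈ S_k denotes the operator acting with projector P_i on register s_i (i=1..k) and identity elsewhere, where S_k is the set of injective sequences of length k from [η], then ∑_{s∈S_k} ⟨ψ|A_s|ψ⟩ ≤ 1. -/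
open scoped Classical

/-- The operator `A_s` acting with the rank-one projector onto `φ i` on register `s i`
(for `i = 1,…,k`) and with the identity on all other registers. -/
noncomputable def projSeq (n η k : ℕ) (s : Fin k → Fin η) (φ : Fin k → Fin (2 ^ n) → ℂ) :
    Matrix (Fin η → Fin (2 ^ n)) (Fin η → Fin (2 ^ n)) ℂ :=
  Matrix.of fun x y =>
    (if ∀ j : Fin η, (∀ i : Fin k, s i ≠ j) → x j = y j then (1 : ℂ) else 0) *
      ∏ i : Fin k, φ i (x (s i)) * star (φ i (y (s i)))

/-!
Complete the orthonormal `φ i` to a Parseval frame `B` of `ℂ^(2^n)`: the columns of `φ` together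
with those of the projector `1 - φ φᴴ` onto their orthogonal complement. In the product frame
`B^⊗η` every `A_s` is diagonal, `A_s = B^⊗η D_s (B^⊗η)ᴴ` with `D_s a = 1` iff `a ∘ s` lists the
`φ i` in order, so `⟨ψ|A_s|ψ⟩ = ∑_{a ∘ s = inl} |c a|²` where `c = (B^⊗η)ᴴ ψ` has
`∑ |c a|² = ‖ψ‖² = 1`. Antisymmetry of `ψ` kills `c a` for non-injective `a`, and an injective `a`
determines `s` from `a ∘ s`, so each `|c a|²` is counted at most once in `∑_s ⟨ψ|A_s|ψ⟩`.
-/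

open Matrix

namespace Matrix

section piKronecker

variable {ι l m n R : Type*} [Fintype ι]

/-- The tensor product `⨂ j, A j`, written in the product basis indexed by `ι → m`. -/
def piKronecker [CommMonoid R] (A : ι → Matrix m n R) : Matrix (ι → m) (ι → n) R :=
  of fun x y => ∏ j, A j (x j) (y j)

@[simp]
theorem piKronecker_apply [CommMonoid R] (A : ι → Matrix m n R) (x : ι → m) (y : ι → n) :
    piKronecker A x y = ∏ j, A j (x j) (y j) := rfl

theorem piKronecker_mul [DecidableEq ι] [Fintype m] [CommSemiring R]
    (A : ι → Matrix l m R) (B : ι → Matrix m n R) :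
    piKronecker A * piKronecker B = piKronecker fun j => A j * B j := by
  ext x y
  simp only [mul_apply, piKronecker_apply, Fintype.prod_sum, Finset.prod_mul_distrib]

theorem piKronecker_diagonal [DecidableEq ι] [DecidableEq m] [CommMonoidWithZero R]
    (d : ι → m → R) :
    piKronecker (fun j => diagonal (d j)) = diagonal fun x => ∏ j, d j (x j) := by
  ext x y
  simp only [piKronecker_apply, diagonal_apply, Finset.prod_ite_zero, Finset.mem_univ,
    true_implies, funext_iff]

theorem piKronecker_one [DecidableEq ι] [DecidableEq m] [CommSemiring R] :
    piKronecker (fun _ => (1 : Matrix m m R)) = (1 : Matrix (ι → m) (ι → m) R) := by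
  simpa using piKronecker_diagonal (ι := ι) fun _ => (1 : m → R)

theorem conjTranspose_piKronecker [CommSemiring R] [StarRing R] (A : ι → Matrix m n R) :
    (piKronecker A)ᴴ = piKronecker fun j => (A j)ᴴ := by
  ext x y
  simp [star_prod]

theorem piKronecker_mulVec_comp [DecidableEq ι] [Fintype n] [CommSemiring R] (A : Matrix m n R)
    (v : (ι → n) → R) (σ : Equiv.Perm ι) (x : ι → m) :
    (piKronecker (fun _ => A) *ᵥ v) (x ∘ σ) =
      (piKronecker (fun _ => A) *ᵥ fun y => v (y ∘ σ)) x := by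
  simp only [mulVec, dotProduct, piKronecker_apply, Function.comp_apply]
  rw [← Equiv.sum_comp (σ.symm.arrowCongr (Equiv.refl n))]
  refine Fintype.sum_congr _ _ fun y => ?_
  have hy : (σ.symm.arrowCongr (Equiv.refl n)) y = y ∘ σ := rfl
  rw [hy]
  exact congrArg (· * v (y ∘ σ)) (Equiv.prod_comp σ fun j => A (x j) (y j))

theorem piKronecker_mulVec_eq_zero_of_not_injective [DecidableEq ι] [Fintype n] [CommRing R]
    [NoZeroDivisors R] [CharZero R] (A : Matrix m n R) {v : (ι → n) → R}
    (hv : ∀ i j : ι, i ≠ j → ∀ y : ι → n, v (y ∘ Equiv.swap i j) = -v y)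
    {x : ι → m} (hx : ¬Function.Injective x) :
    (piKronecker (fun _ => A) *ᵥ v) x = 0 := by
  obtain ⟨i, j, hxij, hij⟩ := Function.not_injective_iff.mp hx
  have hswap : x ∘ Equiv.swap i j = x := by
    simp [Equiv.comp_swap_eq_update, hxij]
  have hv' : (fun y => v (y ∘ Equiv.swap i j)) = -v := funext (hv i j hij)
  have key := piKronecker_mulVec_comp A v (Equiv.swap i j) x
  rw [hswap, hv', mulVec_neg, Pi.neg_apply] at key
  exact CharZero.eq_neg_self_iff.mp key

end piKronecker

section parsevalCompletion

variable {m κ R : Type*} [Ring R] [StarRing R] [Fintype κ] [DecidableEq m]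

def parsevalCompletion (Φ : Matrix m κ R) : Matrix m (κ ⊕ m) R :=
  fromCols Φ (1 - Φ * Φᴴ)

theorem parsevalCompletion_mul_conjTranspose [Fintype m] [DecidableEq κ] {Φ : Matrix m κ R}
    (hΦ : Φᴴ * Φ = 1) :
    parsevalCompletion Φ * (parsevalCompletion Φ)ᴴ = 1 := by
  have hP : Φ * Φᴴ * (Φ * Φᴴ) = Φ * Φᴴ := by
    rw [Matrix.mul_assoc, ← Matrix.mul_assoc Φᴴ, hΦ, Matrix.one_mul]
  rw [parsevalCompletion, conjTranspose_fromCols_eq_fromRows_conjTranspose, fromCols_mul_fromRows,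
    conjTranspose_sub, conjTranspose_one, conjTranspose_mul, conjTranspose_conjTranspose]
  simp only [sub_mul, mul_sub, one_mul, mul_one, hP]
  abel

end parsevalCompletion

theorem mul_diagonal_single_mul_conjTranspose {m T R : Type*} [Fintype T] [DecidableEq T]
    [CommSemiring R] [StarRing R] (B : Matrix m T R) (t : T) :
    B * diagonal (Pi.single t (1 : R)) * Bᴴ = vecMulVec (Bᵀ t) (star (Bᵀ t)) := by
  ext x y
  simp [mul_apply, diagonal_apply, Pi.single_apply, vecMulVec_apply]

end Matrix

theorem Function.Injective.prod_extend {ι κ α M : Type*} [Fintype ι] [Fintype κ] [DecidableEq ι]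
    [CommMonoid M] {s : κ → ι} (hs : Function.Injective s) (g : κ → α) (e : ι → α)
    (F : ι → α → M) :
    ∏ j, F j (Function.extend s g e j) =
      (∏ i, F (s i) (g i)) * ∏ j ∈ (Finset.univ.image s)ᶜ, F j (e j) := by
  rw [← Finset.prod_mul_prod_compl (Finset.univ.image s), Finset.prod_image hs.injOn]
  congr 1
  · exact Fintype.prod_congr _ _ fun i => by rw [hs.extend_apply]
  · refine Finset.prod_congr rfl fun j hj => ?_
    rw [Function.extend_apply']
    simpa using hj

theorem Function.Injective.prod_extend_single_apply {ι κ T R : Type*} [Fintype ι] [Fintype κ]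
    [DecidableEq ι] [DecidableEq T] [CommMonoidWithZero R] {s : κ → ι}
    (hs : Function.Injective s) (t : κ → T) (a : ι → T) :
    ∏ j, Function.extend s (fun i => Pi.single (t i) (1 : R)) (1 : ι → T → R) j (a j) =
      if a ∘ s = t then 1 else 0 := by
  refine (hs.prod_extend _ _ fun j (w : T → R) => w (a j)).trans ?_
  simp [Pi.single_apply, Finset.prod_boole, funext_iff]

theorem Function.Injective.sum_ite_comp_eq_le {ι κ T : Type*} [Fintype κ] [DecidableEq T]
    {a : ι → T} (ha : Function.Injective a) (t : κ → T) (S : Finset (κ → ι)) {w : ℝ}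
    (hw : 0 ≤ w) :
    ∑ s ∈ S, (if a ∘ s = t then 1 else 0) * w ≤ w := by
  have hcard : (S.filter fun s => a ∘ s = t).card ≤ 1 :=
    Finset.card_le_one.mpr fun s₁ h₁ s₂ h₂ =>
      ha.comp_left ((Finset.mem_filter.mp h₁).2.trans (Finset.mem_filter.mp h₂).2.symm)
  rw [← Finset.sum_mul, Finset.sum_boole]
  exact mul_le_of_le_one_left hw (by exact_mod_cast hcard)

theorem expval_mul_diagonal_mul_conjTranspose {I J : Type*} [Fintype I] [Fintype J]
    [DecidableEq J] (U : Matrix I J ℂ) (d : J → ℂ) (ψ : I → ℂ) :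
    expval (U * diagonal d * Uᴴ) ψ = ∑ a, d a * (‖(Uᴴ *ᵥ ψ) a‖ : ℂ) ^ 2 := by
  rw [expval, ← mulVec_mulVec, ← mulVec_mulVec, dotProduct_mulVec,
    ← conjTranspose_conjTranspose U, ← star_mulVec, conjTranspose_conjTranspose]
  refine Fintype.sum_congr _ _ fun a => ?_
  rw [mulVec_diagonal, Pi.star_apply, Complex.star_def, ← Complex.conj_mul']
  ring

theorem sum_norm_sq_conjTranspose_mulVec {I J : Type*} [Fintype I] [Fintype J] [DecidableEq I]
    [DecidableEq J] {U : Matrix I J ℂ} (hU : U * Uᴴ = 1) (ψ : I → ℂ) :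
    ((∑ a, ‖(Uᴴ *ᵥ ψ) a‖ ^ 2 : ℝ) : ℂ) = star ψ ⬝ᵥ ψ := by
  have h := expval_mul_diagonal_mul_conjTranspose U (fun _ => 1) ψ
  rw [diagonal_one, Matrix.mul_one, hU, expval, one_mulVec] at h
  push_cast
  simpa only [one_mul] using h.symm

theorem projSeq_eq_piKronecker {n η k : ℕ} {s : Fin k → Fin η} (hs : Function.Injective s)
    (φ : Fin k → Fin (2 ^ n) → ℂ) :
    projSeq n η k s φ =
      piKronecker (Function.extend s (fun i => vecMulVec (φ i) (star (φ i))) 1) := by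
  ext x y
  rw [projSeq, of_apply, piKronecker_apply]
  refine Eq.trans ?_ (hs.prod_extend _ _ fun j (M : Matrix _ _ ℂ) => M (x j) (y j)).symm
  simp [vecMulVec_apply, one_apply, Finset.prod_boole]

theorem projSeq_eq_mul_diagonal_mul {n η k : ℕ} {T : Type*} [Fintype T] [DecidableEq T]
    {B : Matrix (Fin (2 ^ n)) T ℂ} (hB : B * Bᴴ = 1) {φ : Fin k → Fin (2 ^ n) → ℂ}
    {t : Fin k → T} (hφ : ∀ i, Bᵀ (t i) = φ i) {s : Fin k → Fin η}
    (hs : Function.Injective s) :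
    projSeq n η k s φ = piKronecker (fun _ : Fin η => B) *
      diagonal (fun a => if a ∘ s = t then (1 : ℂ) else 0) *
        (piKronecker fun _ : Fin η => B)ᴴ := by
  have hF : Function.extend s (fun i => vecMulVec (φ i) (star (φ i))) 1 =
      fun j => B * diagonal (Function.extend s (fun i => Pi.single (t i) (1 : ℂ)) 1 j) * Bᴴ := by
    funext j
    rw [Function.apply_extend (fun d : T → ℂ => B * diagonal d * Bᴴ)]
    congr 1
    · funext i
      simp [mul_diagonal_single_mul_conjTranspose, hφ]
    · funext j
      simp [hB]
  have hD : (diagonal fun a => if a ∘ s = t then (1 : ℂ) else 0) =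
      piKronecker fun j => diagonal (Function.extend s (fun i => Pi.single (t i) (1 : ℂ)) 1 j) := by
    simp_rw [piKronecker_diagonal, hs.prod_extend_single_apply]
  rw [projSeq_eq_piKronecker hs, hF, hD, conjTranspose_piKronecker, piKronecker_mul,
    piKronecker_mul]

theorem stmt_2_general (n η k : ℕ)
    (ψ : (Fin η → Fin (2 ^ n)) → ℂ)
    (hnorm : dotProduct (star ψ) ψ = 1)
    (hanti : ∀ i j : Fin η, i ≠ j → ∀ x : Fin η → Fin (2 ^ n),
      ψ (x ∘ Equiv.swap i j) = -ψ x)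
    (φ : Fin k → Fin (2 ^ n) → ℂ)
    (horth : ∀ i j : Fin k,
      dotProduct (star (φ i)) (φ j) = if i = j then 1 else 0) :
    ∃ r : ℝ,
      (∑ s ∈ Finset.univ.filter (fun s : Fin k → Fin η => Function.Injective s),
        expval (projSeq n η k s φ) ψ) = (r : ℂ) ∧ r ≤ 1 := by
  let Φ : Matrix (Fin (2 ^ n)) (Fin k) ℂ := of fun u i => φ i u
  have hΦ : Φᴴ * Φ = 1 := by
    ext i j
    simpa [Φ, mul_apply, dotProduct, one_apply] using horth i j
  let B := parsevalCompletion Φ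
  have hB : B * Bᴴ = 1 := parsevalCompletion_mul_conjTranspose hΦ
  have hφ : ∀ i, Bᵀ (Sum.inl i) = φ i := fun _ => rfl
  let 𝔹 := piKronecker fun _ : Fin η => B
  have h𝔹 : 𝔹 * 𝔹ᴴ = 1 := by
    rw [conjTranspose_piKronecker, piKronecker_mul, hB, piKronecker_one]
  let c := 𝔹ᴴ *ᵥ ψ
  have hc_norm : ∑ a, ‖c a‖ ^ 2 = 1 := by
    exact_mod_cast (sum_norm_sq_conjTranspose_mulVec h𝔹 ψ).trans hnorm
  have hc_zero : ∀ a, ¬Function.Injective a → c a = 0 := fun a ha => by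
    simp only [c, 𝔹, conjTranspose_piKronecker]
    exact piKronecker_mulVec_eq_zero_of_not_injective _ hanti ha
  refine ⟨∑ s ∈ Finset.univ.filter (fun s : Fin k → Fin η => Function.Injective s),
    ∑ a, (if a ∘ s = Sum.inl then 1 else 0) * ‖c a‖ ^ 2, ?_, ?_⟩
  · push_cast [apply_ite Complex.ofReal]
    refine Finset.sum_congr rfl fun s hs => ?_
    rw [projSeq_eq_mul_diagonal_mul hB hφ (Finset.mem_filter.mp hs).2,
      expval_mul_diagonal_mul_conjTranspose]
  · refine Finset.sum_comm.trans_le (le_of_le_of_eq (Finset.sum_le_sum fun a _ => ?_) hc_norm)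
    by_cases ha : Function.Injective a
    · exact ha.sum_ite_comp_eq_le _ _ (sq_nonneg _)
    · simp [hc_zero a ha]

/-- For a normalized antisymmetric state ψ on η registers and projectors onto
orthonormal states applied along injective sequences s ∈ S_k, ∑_{s ∈ S_k} ⟨ψ|A_s|ψ⟩ ≤ 1. -/
theorem stmt_2 (n η k : ℕ) (hk : k ≤ η)
    (ψ : (Fin η → Fin (2 ^ n)) → ℂ)
    (hnorm : dotProduct (star ψ) ψ = 1)
    (hanti : ∀ i j : Fin η, i ≠ j → ∀ x : Fin η → Fin (2 ^ n),
      ψ (x ∘ Equiv.swap i j) = -ψ x)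
    (φ : Fin k → Fin (2 ^ n) → ℂ)
    (horth : ∀ i j : Fin k,
      dotProduct (star (φ i)) (φ j) = if i = j then 1 else 0) :
    ∃ r : ℝ,
      (∑ s ∈ Finset.univ.filter (fun s : Fin k → Fin η => Function.Injective s),
        expval (projSeq n η k s φ) ψ) = (r : ℂ) ∧ r ≤ 1 :=
  stmt_2_general n η k ψ hnorm hanti φ horth
end

section
/- Under the hypotheses of the antisymmetric projector lemma, for any two distinct injective sequences x ≠ y in S_k, the corresponding product-projector operators satisfy ⟨ψ|A_x A_y|ψ⟩ = 0; in particular |ψ⟩ has no support on the intersection of the +1 eigenspaces of A_x and A_y. -/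
open scoped Classical

/-!
Both `A_x` and `A_y` act as `⊗ᵢ |φᵢ⟩⟨φᵢ|` on their registers, so `(A_x A_y ψ)(X)` is a double
sum over the values `u`, `v` written into the registers of `x` and of `y`. If a register
`x i = y j` is shared with `i ≠ j`, summing over its value produces the factor `⟨φ i|φ j⟩ = 0`.
Otherwise registers are shared only along the diagonal, and as `x ≠ y` there is an `i` with
`a = x i ∉ range y` and `b = y i ∉ range x`. Exchanging `u i` and `v i` permutes the double sum,
leaves the coefficients unchanged and swaps the registers `a` and `b` in the argument of `ψ`, so by
antisymmetry the sum equals its own negative.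
-/

open Function Finset Matrix

theorem Fintype.sum_eq_zero_of_perm_eq_neg {α β : Type*} [Fintype α] [AddCommGroup β]
    [IsAddTorsionFree β] (σ : Equiv.Perm α) {F : α → β} (hF : ∀ a, F (σ a) = -F a) :
    ∑ a, F a = 0 := by
  have h := Equiv.sum_comp σ F
  rw [Finset.sum_congr rfl fun a _ => hF a, sum_neg_distrib] at h
  exact neg_eq_self.mp h

theorem Fintype.sum_apply_mul_eq_zero {ι V R : Type*} [Fintype ι] [DecidableEq ι] [Fintype V]
    [NonUnitalNonAssocSemiring R] (i : ι) {f : V → R} (hf : ∑ t, f t = 0)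
    {g : (ι → V) → R} (hg : ∀ u t, g (update u i t) = g u) :
    ∑ u, f (u i) * g u = 0 := by
  rw [← (Equiv.funSplitAt i V).symm.sum_comp, Fintype.sum_prod_type]
  rcases isEmpty_or_nonempty V with _ | ⟨⟨t₀⟩⟩
  · simp
  have hsplit : ∀ t w, g ((Equiv.funSplitAt i V).symm (t, w))
      = g ((Equiv.funSplitAt i V).symm (t₀, w)) := by
    intro t w
    rw [← hg _ t₀]
    congr 1
    funext j
    by_cases hj : j = i
    · subst hj; simp
    · simp [hj]
  calc ∑ t, ∑ w, f ((Equiv.funSplitAt i V).symm (t, w) i)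
        * g ((Equiv.funSplitAt i V).symm (t, w))
      = ∑ t, f t * ∑ w, g ((Equiv.funSplitAt i V).symm (t₀, w)) := by
        simp [mul_sum, hsplit]
    _ = 0 := by rw [← sum_mul, hf, zero_mul]

section Extend

variable {ι κ V : Type*} [DecidableEq ι] {s : κ → ι}

theorem Function.extend_update [DecidableEq κ] (hs : Injective s) (u : κ → V) (z : ι → V)
    (i : κ) (t : V) : extend s (update u i t) z = update (extend s u z) (s i) t := by
  funext j
  by_cases hj : ∃ i', s i' = j
  · obtain ⟨i', rfl⟩ := hj
    by_cases hi : i' = i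
    · subst hi
      rw [hs.extend_apply, update_self, update_self]
    · rw [update_of_ne (hs.ne hi), hs.extend_apply, hs.extend_apply, update_of_ne hi]
  · have hji : j ≠ s i := fun h => hj ⟨i, h.symm⟩
    rw [update_of_ne hji, extend_apply' _ _ _ hj, extend_apply' _ _ _ hj]

theorem Function.extend_update_of_forall_ne (u : κ → V) (z : ι → V) {m : ι}
    (hm : ∀ i, s i ≠ m) (t : V) : extend s u (update z m t) = update (extend s u z) m t := by
  funext j
  by_cases hjm : j = m
  · subst hjm
    rw [update_self, extend_apply' _ _ _ fun ⟨i, hi⟩ => hm i hi, update_self]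
  · rw [update_of_ne hjm, extend_def, extend_def, update_of_ne hjm]

theorem Function.extend_update_apply_self (u : κ → V) (z : ι → V) (i : κ) (t : V) :
    extend s u (update z (s i) t) = extend s u z := by
  funext j
  by_cases hj : ∃ i', s i' = j
  · rw [extend_def, extend_def, dif_pos hj, dif_pos hj]
  · rw [extend_apply' _ _ _ hj, extend_apply' _ _ _ hj, update_of_ne fun h => hj ⟨i, h.symm⟩]

theorem Function.extend_update_extend_update_eq_comp_swap [DecidableEq κ] {x y : κ → ι}
    (hx : Injective x) (hy : Injective y) {i : κ} (hxi : ∀ j, y j ≠ x i) (hne : x i ≠ y i)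
    (u v : κ → V) (z : ι → V) :
    extend y (update v i (u i)) (extend x (update u i (v i)) z)
      = extend y v (extend x u z) ∘ Equiv.swap (x i) (y i) := by
  rw [extend_update hy, extend_update hx, extend_update_of_forall_ne _ _ hxi,
    Equiv.comp_swap_eq_update, hy.extend_apply, extend_apply' _ _ _ fun ⟨j, hj⟩ => hxi j hj,
    hx.extend_apply, update_comm hne]

end Extend

/-- The contraction `⟨⊗ᵢ φ i|_s f⟩` of the registers `s`, evaluated at `X` on the others. -/
noncomputable def partialInner {ι κ V : Type*} [DecidableEq κ] [Fintype κ] [Fintype V]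
    (s : κ → ι) (φ : κ → V → ℂ) (f : (ι → V) → ℂ) (X : ι → V) : ℂ :=
  ∑ u : κ → V, (∏ i, star (φ i (u i))) * f (extend s u X)

theorem partialInner_update {ι κ V : Type*} [DecidableEq ι] [DecidableEq κ] [Fintype κ]
    [Fintype V] (s : κ → ι) (φ : κ → V → ℂ) (f : (ι → V) → ℂ) (X : ι → V) (i : κ) (t : V) :
    partialInner s φ f (update X (s i) t) = partialInner s φ f X := by
  simp only [partialInner, extend_update_apply_self]

section ProjSeq

variable {n η k : ℕ} {x y : Fin k → Fin η} {φ : Fin k → Fin (2 ^ n) → ℂ}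

theorem projSeq_mulVec_apply (hx : Injective x) (f : (Fin η → Fin (2 ^ n)) → ℂ)
    (X : Fin η → Fin (2 ^ n)) :
    (projSeq n η k x φ *ᵥ f) X = (∏ i, φ i (X (x i))) * partialInner x φ f X := by
  have hfix : ∀ W ∈ ({W | ∀ j, (∀ i, x i ≠ j) → X j = W j} : Finset _),
      extend x (W ∘ x) X = W := by
    intro W hW
    funext j
    by_cases hj : ∃ i, x i = j
    · obtain ⟨i, rfl⟩ := hj
      exact hx.extend_apply _ _ i
    · rw [extend_apply' _ _ _ hj]
      exact (mem_filter.mp hW).2 j fun i hi => hj ⟨i, hi⟩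
  rw [mulVec, dotProduct, partialInner, mul_sum]
  simp only [projSeq, of_apply, ite_mul, one_mul, zero_mul]
  rw [← sum_filter]
  refine sum_nbij' (fun W => W ∘ x) (fun u => extend x u X) (fun _ _ => mem_univ _) ?_ hfix
    (fun u _ => extend_comp hx u X) ?_
  · intro u _
    simp only [mem_filter, mem_univ, true_and]
    exact fun j hj => (extend_apply' _ _ _ fun ⟨i, hi⟩ => hj i hi).symm
  · intro W hW
    rw [hfix W hW, prod_mul_distrib, mul_assoc]
    rfl

theorem projSeq_mulVec_projSeq_mulVec_eq_zero_of_orthogonal (hx : Injective x) (hy : Injective y)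
    {i j : Fin k} (hxy : x i = y j) (horth : star (φ i) ⬝ᵥ φ j = 0)
    (f : (Fin η → Fin (2 ^ n)) → ℂ) :
    projSeq n η k x φ *ᵥ (projSeq n η k y φ *ᵥ f) = 0 := by
  funext X
  rw [projSeq_mulVec_apply hx, Pi.zero_apply, partialInner]
  simp only [projSeq_mulVec_apply hy]
  refine mul_eq_zero_of_right _ ?_
  set g : (Fin k → Fin (2 ^ n)) → ℂ := fun u =>
    (∏ i' ∈ univ.erase i, star (φ i' (u i'))) *
      ((∏ j' ∈ univ.erase j, φ j' (extend x u X (y j'))) * partialInner y φ f (extend x u X))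
  have hsplit : ∀ u : Fin k → Fin (2 ^ n),
      (∏ i', star (φ i' (u i'))) *
        ((∏ j', φ j' (extend x u X (y j'))) * partialInner y φ f (extend x u X))
        = star (φ i (u i)) * φ j (u i) * g u := by
    intro u
    rw [← mul_prod_erase univ _ (mem_univ i), ← mul_prod_erase univ _ (mem_univ j), ← hxy,
      hx.extend_apply]
    ring
  simp only [hsplit]
  refine Fintype.sum_apply_mul_eq_zero i horth fun u t => ?_
  simp only [g, extend_update hx, hxy, partialInner_update]
  have hu : ∏ i' ∈ univ.erase i, star (φ i' (update u i t i'))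
      = ∏ i' ∈ univ.erase i, star (φ i' (u i')) :=
    prod_congr rfl fun i' hi' => by rw [update_of_ne (ne_of_mem_erase hi')]
  have hW : ∏ j' ∈ univ.erase j, φ j' (update (extend x u X) (y j) t (y j'))
      = ∏ j' ∈ univ.erase j, φ j' (extend x u X (y j')) :=
    prod_congr rfl fun j' hj' => by rw [update_of_ne (hy.ne (ne_of_mem_erase hj'))]
  rw [hu, hW]

theorem projSeq_mulVec_projSeq_mulVec_eq_zero_of_antisymm (hx : Injective x) (hy : Injective y)
    (hdiag : ∀ i j, x i = y j → i = j) {i : Fin k} (hne : x i ≠ y i)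
    {ψ : (Fin η → Fin (2 ^ n)) → ℂ} (hψ : ∀ X, ψ (X ∘ Equiv.swap (x i) (y i)) = -ψ X) :
    projSeq n η k x φ *ᵥ (projSeq n η k y φ *ᵥ ψ) = 0 := by
  have hxi : ∀ j, y j ≠ x i := by
    intro j hj
    obtain rfl := hdiag i j hj.symm
    exact hne hj.symm
  funext X
  rw [projSeq_mulVec_apply hx, Pi.zero_apply]
  refine mul_eq_zero_of_right _ ?_
  simp only [projSeq_mulVec_apply hy, partialInner, mul_sum, ← Fintype.sum_prod_type']
  have hσ : Involutive fun p : (Fin k → Fin (2 ^ n)) × (Fin k → Fin (2 ^ n)) =>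
      (update p.1 i (p.2 i), update p.2 i (p.1 i)) := by
    rintro ⟨u, v⟩
    simp
  refine Fintype.sum_eq_zero_of_perm_eq_neg hσ.toPerm ?_
  rintro ⟨u, v⟩
  dsimp only [Involutive.coe_toPerm]
  rw [extend_update_extend_update_eq_comp_swap hx hy hxi hne, hψ, extend_update hx]
  have hΦ : ∏ j, φ j (update (extend x u X) (x i) (v i) (y j)) = ∏ j, φ j (extend x u X (y j)) :=
    prod_congr rfl fun j _ => by rw [update_of_ne (hxi j)]
  have hc : (∏ j, star (φ j (update u i (v i) j))) * ∏ j, star (φ j (update v i (u i) j))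
      = (∏ j, star (φ j (u j))) * ∏ j, star (φ j (v j)) := by
    simp only [← prod_mul_distrib]
    refine prod_congr rfl fun j _ => ?_
    by_cases hj : j = i
    · subst hj
      simp only [update_self, mul_comm]
    · simp only [update_of_ne hj]
  rw [hΦ]
  linear_combination (-(∏ j, φ j (extend x u X (y j))) * ψ (extend y v (extend x u X))) * hc

end ProjSeq

theorem stmt_3_general (n η k : ℕ)
    (ψ : (Fin η → Fin (2 ^ n)) → ℂ)
    (hanti : ∀ i j : Fin η, i ≠ j → ∀ x : Fin η → Fin (2 ^ n),
      ψ (x ∘ Equiv.swap i j) = -ψ x)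
    (φ : Fin k → Fin (2 ^ n) → ℂ)
    (horth : ∀ i j : Fin k,
      dotProduct (star (φ i)) (φ j) = if i = j then 1 else 0)
    (x y : Fin k → Fin η) (hx : Function.Injective x) (hy : Function.Injective y)
    (hxy : x ≠ y) :
    expval (projSeq n η k x φ * projSeq n η k y φ) ψ = 0 := by
  suffices h : projSeq n η k x φ *ᵥ (projSeq n η k y φ *ᵥ ψ) = 0 by
    rw [expval, ← mulVec_mulVec, h, dotProduct_zero]
  by_cases hdiag : ∀ i j, x i = y j → i = j
  · obtain ⟨i, hi⟩ := Function.ne_iff.mp hxy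
    exact projSeq_mulVec_projSeq_mulVec_eq_zero_of_antisymm hx hy hdiag hi (hanti _ _ hi)
  · push Not at hdiag
    obtain ⟨i, j, hxy, hij⟩ := hdiag
    exact projSeq_mulVec_projSeq_mulVec_eq_zero_of_orthogonal hx hy hxy
      ((horth i j).trans (if_neg hij)) ψ

/-- For distinct injective sequences x ≠ y, ⟨ψ|A_x A_y|ψ⟩ = 0. -/
theorem stmt_3 (n η k : ℕ) (hk : k ≤ η)
    (ψ : (Fin η → Fin (2 ^ n)) → ℂ)
    (hnorm : dotProduct (star ψ) ψ = 1)
    (hanti : ∀ i j : Fin η, i ≠ j → ∀ x : Fin η → Fin (2 ^ n),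
      ψ (x ∘ Equiv.swap i j) = -ψ x)
    (φ : Fin k → Fin (2 ^ n) → ℂ)
    (horth : ∀ i j : Fin k,
      dotProduct (star (φ i)) (φ j) = if i = j then 1 else 0)
    (x y : Fin k → Fin η) (hx : Function.Injective x) (hy : Function.Injective y)
    (hxy : x ≠ y) :
    expval (projSeq n η k x φ * projSeq n η k y φ) ψ = 0 :=
  stmt_3_general n η k ψ hanti φ horth x y hx hy hxy
end

section
/- For integers η > 2k ≥ 2 with k | η, the sum e²(η/k)^k ∑_{a=0}^{k} C(k,a)(η/k − 1)^{k−a} (η−2k+a)!/(η−a)! is bounded above by e³(2η(k+e)/k²)^k. -/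
/-- For integers η > 2k ≥ 2 with k ∣ η,
`e²(η/k)^k ∑_{a=0}^{k} C(k,a)(η/k − 1)^{k−a}(η−2k+a)!/(η−a)! ≤ e³(2η(k+e)/k²)^k`. -/
theorem stmt_15 (η k : ℕ) (hk : 1 ≤ k) (hη : 2 * k < η) (hdvd : k ∣ η) :
    Real.exp 1 ^ 2 * ((η : ℝ) / (k : ℝ)) ^ k *
        (∑ a ∈ Finset.range (k + 1), (k.choose a : ℝ) * ((η : ℝ) / (k : ℝ) - 1) ^ (k - a) *
          ((Nat.factorial (η - 2 * k + a) : ℝ) / (Nat.factorial (η - a) : ℝ))) ≤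
      Real.exp 1 ^ 3 * (2 * (η : ℝ) * ((k : ℝ) + Real.exp 1) / (k : ℝ) ^ 2) ^ k := by
  have hE : (2:ℝ) ≤ Real.exp 1 := by
    have := Real.add_one_le_exp 1; linarith
  have hE0 : (0:ℝ) < Real.exp 1 := Real.exp_pos 1
  have hη3 : 3 * k ≤ η := by
    obtain ⟨m, rfl⟩ := hdvd
    have hm : 3 ≤ m := by nlinarith
    nlinarith
  have hk0 : (0:ℝ) < k := by exact_mod_cast hk
  have hη0 : (0:ℝ) < η := by
    have : 0 < η := by omega
    exact_mod_cast this
  -- key factorial ratio bound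
  have key : ∀ a ∈ Finset.range (k+1),
      (Nat.factorial (η - 2*k + a) : ℝ) / (Nat.factorial (η - a) : ℝ) ≤ (3/η)^(k-a) := by
    intro a ha
    have hak : a ≤ k := Nat.lt_succ_iff.mp (Finset.mem_range.mp ha)
    set n := η - 2*k + a with hn
    have hfacN : Nat.factorial n * (n + 1)^(2*(k-a)) ≤ Nat.factorial (η - a) := by
      have h := @Nat.factorial_mul_pow_le_factorial n (2*(k-a))
      have heq : n + 2*(k-a) = η - a := by omega
      rwa [heq] at h
    have hfac : (Nat.factorial n : ℝ) * ((n:ℝ) + 1)^(2*(k-a)) ≤ (Nat.factorial (η - a) : ℝ) := by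
      exact_mod_cast hfacN
    have hfpos : (0:ℝ) < (Nat.factorial (η - a) : ℝ) := by
      exact_mod_cast Nat.factorial_pos _
    rw [div_le_iff₀ hfpos]
    have hc : (η:ℝ)/3 ≤ (n:ℝ) + 1 := by
      have h' : η ≤ 3 * (n + 1) := by omega
      have h'' : (η:ℝ) ≤ 3 * ((n:ℝ) + 1) := by exact_mod_cast h'
      linarith
    have hc1 : (1:ℝ) ≤ (n:ℝ) + 1 := by
      have := Nat.cast_nonneg (α:=ℝ) n; linarith
    have hpow : ((η:ℝ)/3)^(k-a) ≤ ((n:ℝ) + 1)^(2*(k-a)) := by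
      calc ((η:ℝ)/3)^(k-a) ≤ ((n:ℝ) + 1)^(k-a) := by
            apply pow_le_pow_left₀ (by positivity) hc
        _ ≤ ((n:ℝ) + 1)^(2*(k-a)) := by
            apply pow_le_pow_right₀ hc1; omega
    have h1 : (1:ℝ) ≤ (3/η)^(k-a) * ((n:ℝ) + 1)^(2*(k-a)) := by
      have hmul := mul_le_mul_of_nonneg_left hpow
        (by positivity : (0:ℝ) ≤ (3/(η:ℝ))^(k-a))
      calc (1:ℝ) = (3/(η:ℝ) * ((η:ℝ)/3))^(k-a) := by
            rw [show (3:ℝ)/(η:ℝ) * ((η:ℝ)/3) = 1 by field_simp]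
            simp
        _ = (3/(η:ℝ))^(k-a) * ((η:ℝ)/3)^(k-a) := mul_pow _ _ _
        _ ≤ _ := hmul
    calc (Nat.factorial n : ℝ)
        = (Nat.factorial n : ℝ) * 1 := by ring
      _ ≤ (Nat.factorial n : ℝ) * ((3/(η:ℝ))^(k-a) * ((n:ℝ) + 1)^(2*(k-a))) := by
          apply mul_le_mul_of_nonneg_left h1 (by positivity)
      _ = (3/(η:ℝ))^(k-a) * ((Nat.factorial n : ℝ) * ((n:ℝ) + 1)^(2*(k-a))) := by ring
      _ ≤ (3/(η:ℝ))^(k-a) * (Nat.factorial (η - a) : ℝ) := by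
          apply mul_le_mul_of_nonneg_left hfac (by positivity)
  -- bound each summand
  have hηk1 : (1:ℝ) ≤ (η:ℝ)/(k:ℝ) := by
    rw [le_div_iff₀ hk0]
    have hkη : k ≤ η := by omega
    simpa using (by exact_mod_cast hkη : (k:ℝ) ≤ (η:ℝ))
  have hsum : (∑ a ∈ Finset.range (k + 1), (k.choose a : ℝ) * ((η : ℝ) / (k : ℝ) - 1) ^ (k - a) *
          ((Nat.factorial (η - 2 * k + a) : ℝ) / (Nat.factorial (η - a) : ℝ)))
      ≤ (3/(k:ℝ) + 1)^k := by
    calc _ ≤ ∑ a ∈ Finset.range (k + 1), (k.choose a : ℝ) * (3/(k:ℝ))^(k-a) := by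
          apply Finset.sum_le_sum
          intro a ha
          have h1 : ((η : ℝ) / (k : ℝ) - 1) ^ (k - a) ≤ ((η:ℝ)/(k:ℝ))^(k-a) := by
            apply pow_le_pow_left₀ (by linarith) (by linarith)
          have h2 := key a ha
          have h3 : ((η : ℝ) / (k : ℝ) - 1) ^ (k - a) *
              ((Nat.factorial (η - 2 * k + a) : ℝ) / (Nat.factorial (η - a) : ℝ))
              ≤ ((η:ℝ)/(k:ℝ))^(k-a) * (3/(η:ℝ))^(k-a) := by
            apply mul_le_mul h1 h2 (by positivity) (by positivity)
          have h4 : ((η:ℝ)/(k:ℝ))^(k-a) * (3/(η:ℝ))^(k-a) = (3/(k:ℝ))^(k-a) := by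
            rw [← mul_pow]
            congr 1
            field_simp
          rw [mul_assoc]
          apply mul_le_mul_of_nonneg_left _ (by positivity)
          rw [← h4]; exact h3
      _ = (3/(k:ℝ) + 1)^k := by
          rw [add_comm (3/(k:ℝ)) 1, add_pow]
          apply Finset.sum_congr rfl
          intro a ha
          ring
  -- combine
  have hpre : (0:ℝ) ≤ Real.exp 1 ^ 2 * ((η : ℝ) / (k : ℝ)) ^ k := by positivity
  calc Real.exp 1 ^ 2 * ((η : ℝ) / (k : ℝ)) ^ k *
        (∑ a ∈ Finset.range (k + 1), (k.choose a : ℝ) * ((η : ℝ) / (k : ℝ) - 1) ^ (k - a) *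
          ((Nat.factorial (η - 2 * k + a) : ℝ) / (Nat.factorial (η - a) : ℝ)))
      ≤ Real.exp 1 ^ 2 * ((η : ℝ) / (k : ℝ)) ^ k * ((3/(k:ℝ) + 1)^k) :=
        mul_le_mul_of_nonneg_left hsum hpre
    _ = Real.exp 1 ^ 2 * (((η:ℝ)/(k:ℝ)) * (3/(k:ℝ) + 1))^k := by
        rw [mul_pow]; ring
    _ ≤ Real.exp 1 ^ 3 * (2 * (η : ℝ) * ((k : ℝ) + Real.exp 1) / (k : ℝ) ^ 2) ^ k := by
        apply mul_le_mul
        · calc Real.exp 1 ^ 2 = Real.exp 1 ^ 2 * 1 := by ring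
            _ ≤ Real.exp 1 ^ 2 * Real.exp 1 := by
                apply mul_le_mul_of_nonneg_left (by linarith) (by positivity)
            _ = Real.exp 1 ^ 3 := by ring
        · apply pow_le_pow_left₀ (by positivity)
          have h1 : ((η:ℝ)/(k:ℝ)) * (3/(k:ℝ) + 1) = (η:ℝ) * ((k:ℝ) + 3) / (k:ℝ)^2 := by
            field_simp; ring
          rw [h1]
          apply div_le_div_of_nonneg_right _ (by positivity)
          nlinarith
        · positivity
        · positivity
end
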